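/- Let N ≥ 2, let G be an N×N symmetric positive semidefinite real matrix with G e = 0, let ζ ≥ 0, let ν ∈ ℝ^N have all entries ν_i > 0, and let R_1, …, R_N > 0. Suppose G + ζ e eᵀ ⪰ D_ν^{-1}, where D_ν is the diagonal matrix with diagonal entries ν_1, …, ν_N and ⪰ denotes the positive semidefinite (Loewner) order. Then for every x ∈ S with |x_i| ≤ R_i for all i, ( sup{⟨x,u⟩ : u ∈ ℝ^N, uᵀGu ≤ 1} )² ≤ Σ_{i=1}^N ν_i R_i². -/

import Mathlib

/-!
Replacing `u` by `v = u - c·e` with `∑ vᵢ = 0` changes neither `⟨x, u⟩` (as `∑ xᵢ = 0`) nor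
`uᵀGu` (as `Ge = 0 = eᵀG`). On such `v` the term `ζ e eᵀ` vanishes, so the matrix inequality gives
`∑ vᵢ² / νᵢ ≤ vᵀGv ≤ 1`, and weighted Cauchy–Schwarz bounds `⟨x, v⟩²` by `∑ νᵢ xᵢ² ≤ ∑ νᵢ Rᵢ²`.
-/

open Matrix Finset

section DualNorm

variable {ι : Type*} [Fintype ι]

theorem sum_sum_mul_mul_eq_dotProduct_mulVec (G : Matrix ι ι ℝ) (u : ι → ℝ) :
    ∑ i, ∑ j, u i * G i j * u j = u ⬝ᵥ G *ᵥ u := by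
  simp only [dotProduct, mulVec, Finset.mul_sum, mul_assoc]

theorem exists_sum_sub_const_eq_zero (u : ι → ℝ) : ∃ c : ℝ, ∑ i, (u i - c) = 0 := by
  rcases isEmpty_or_nonempty ι with _ | _
  · exact ⟨0, by simp⟩
  · refine ⟨(∑ i, u i) / Fintype.card ι, ?_⟩
    rw [Finset.sum_sub_distrib, Finset.sum_const, Finset.card_univ, nsmul_eq_mul,
      mul_div_cancel₀ _ (Nat.cast_ne_zero.mpr Fintype.card_ne_zero), sub_self]

theorem dotProduct_sub_const {x : ι → ℝ} (hx : ∑ i, x i = 0) (u : ι → ℝ) (c : ℝ) :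
    x ⬝ᵥ (u - fun _ => c) = x ⬝ᵥ u := by
  simp only [dotProduct, Pi.sub_apply, mul_sub, Finset.sum_sub_distrib, ← Finset.sum_mul, hx,
    zero_mul, sub_zero]

theorem dotProduct_mulVec_sub_const {G : Matrix ι ι ℝ} (hsym : G.IsSymm)
    (hGe : G *ᵥ (fun _ => (1 : ℝ)) = 0) (u : ι → ℝ) (c : ℝ) :
    (u - fun _ => c) ⬝ᵥ G *ᵥ (u - fun _ => c) = u ⬝ᵥ G *ᵥ u := by
  have hGc : G *ᵥ (fun _ => c) = 0 := by
    rw [show (fun _ => c) = c • (fun _ => (1 : ℝ)) by ext; simp, mulVec_smul, hGe, smul_zero]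
  have hcG : (fun _ => c) ᵥ* G = 0 := by rw [← mulVec_transpose, hsym.eq, hGc]
  rw [mulVec_sub, hGc, sub_zero, sub_dotProduct, dotProduct_mulVec (fun _ => c), hcG,
    zero_dotProduct, sub_zero]

theorem sum_inv_mul_sq_le_dotProduct_mulVec [DecidableEq ι] {G : Matrix ι ι ℝ} {ζ : ℝ}
    {ν : ι → ℝ}
    (hLMI : (G + ζ • Matrix.of (fun _ _ : ι => (1 : ℝ)) - diagonal (fun i => (ν i)⁻¹)).PosSemidef)
    {v : ι → ℝ} (hv : ∑ i, v i = 0) :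
    ∑ i, (ν i)⁻¹ * v i ^ 2 ≤ v ⬝ᵥ G *ᵥ v := by
  have hJ : Matrix.of (fun _ _ : ι => (1 : ℝ)) *ᵥ v = 0 := by
    ext i; simp [mulVec, dotProduct, hv]
  have hD : v ⬝ᵥ diagonal (fun i => (ν i)⁻¹) *ᵥ v = ∑ i, (ν i)⁻¹ * v i ^ 2 := by
    simp only [dotProduct, mulVec_diagonal]
    exact Finset.sum_congr rfl fun i _ => by ring
  have h := hLMI.dotProduct_mulVec_nonneg v
  rw [star_trivial, sub_mulVec, add_mulVec, smul_mulVec, hJ, smul_zero, add_zero, dotProduct_sub,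
    hD] at h
  linarith

theorem sq_dotProduct_le_of_pos {ν : ι → ℝ} (hν : ∀ i, 0 < ν i) (x v : ι → ℝ) :
    (x ⬝ᵥ v) ^ 2 ≤ (∑ i, ν i * x i ^ 2) * ∑ i, (ν i)⁻¹ * v i ^ 2 := by
  refine Finset.sum_sq_le_sum_mul_sum_of_sq_le_mul univ
    (fun i _ => mul_nonneg (hν i).le (sq_nonneg _))
    (fun i _ => mul_nonneg (inv_nonneg.mpr (hν i).le) (sq_nonneg _))
    (fun i _ => ?_)
  rw [mul_pow, mul_mul_mul_comm, ← mul_assoc, mul_inv_cancel₀ (hν i).ne', one_mul]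

theorem sq_dotProduct_le_of_dotProduct_mulVec_le_one [DecidableEq ι] {G : Matrix ι ι ℝ}
    (hsym : G.IsSymm) (hGe : G *ᵥ (fun _ => (1 : ℝ)) = 0) {ζ : ℝ} {ν : ι → ℝ}
    (hν : ∀ i, 0 < ν i)
    (hLMI : (G + ζ • Matrix.of (fun _ _ : ι => (1 : ℝ)) - diagonal (fun i => (ν i)⁻¹)).PosSemidef)
    {x : ι → ℝ} (hx : ∑ i, x i = 0) {u : ι → ℝ} (hu : u ⬝ᵥ G *ᵥ u ≤ 1) :
    (x ⬝ᵥ u) ^ 2 ≤ ∑ i, ν i * x i ^ 2 := by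
  obtain ⟨c, hc⟩ := exists_sum_sub_const_eq_zero u
  set v : ι → ℝ := u - fun _ => c
  have hv : ∑ i, (ν i)⁻¹ * v i ^ 2 ≤ u ⬝ᵥ G *ᵥ u := by
    rw [← dotProduct_mulVec_sub_const hsym hGe u c]
    exact sum_inv_mul_sq_le_dotProduct_mulVec hLMI hc
  calc (x ⬝ᵥ u) ^ 2 = (x ⬝ᵥ v) ^ 2 := by rw [dotProduct_sub_const hx]
    _ ≤ (∑ i, ν i * x i ^ 2) * ∑ i, (ν i)⁻¹ * v i ^ 2 :=
      sq_dotProduct_le_of_pos hν _ _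
    _ ≤ (∑ i, ν i * x i ^ 2) * 1 :=
      mul_le_mul_of_nonneg_left (hv.trans hu)
        (Finset.sum_nonneg fun i _ => mul_nonneg (hν i).le (sq_nonneg _))
    _ = ∑ i, ν i * x i ^ 2 := mul_one _

end DualNorm

theorem sq_sSup_le {S : Set ℝ} {C : ℝ} (h0 : (0 : ℝ) ∈ S) (hS : ∀ r ∈ S, r ^ 2 ≤ C) :
    sSup S ^ 2 ≤ C := by
  have hle : ∀ r ∈ S, r ≤ √C := fun r hr => (le_abs_self r).trans (Real.abs_le_sqrt (hS r hr))
  have hC : 0 ≤ C := by simpa using hS 0 h0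
  calc sSup S ^ 2 ≤ √C ^ 2 :=
        pow_le_pow_left₀ (le_csSup ⟨_, hle⟩ h0) (csSup_le ⟨0, h0⟩ hle) 2
    _ = C := Real.sq_sqrt hC

theorem stmt_16_general (N : ℕ) (G : Matrix (Fin N) (Fin N) ℝ)
    (hsym : G.IsSymm)
    (hGe : G.mulVec (fun _ => (1 : ℝ)) = 0)
    (ζ : ℝ) (ν : Fin N → ℝ) (hν : ∀ i, 0 < ν i)
    (R : Fin N → ℝ)
    (hLMI : (G + ζ • Matrix.of (fun _ _ : Fin N => (1 : ℝ))
      - Matrix.diagonal (fun i => (ν i)⁻¹)).PosSemidef)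
    (x : Fin N → ℝ) (hx : ∑ i, x i = 0) (hxR : ∀ i, |x i| ≤ R i) :
    (sSup {r : ℝ | ∃ u : Fin N → ℝ,
        (∑ i, ∑ j, u i * G i j * u j) ≤ 1 ∧ r = ∑ i, x i * u i}) ^ 2
      ≤ ∑ i, ν i * (R i) ^ 2 := by
  calc _ ≤ ∑ i, ν i * x i ^ 2 := by
        refine sq_sSup_le ⟨0, by simp, by simp⟩ ?_
        rintro _ ⟨u, hu, rfl⟩
        rw [sum_sum_mul_mul_eq_dotProduct_mulVec] at hu
        exact sq_dotProduct_le_of_dotProduct_mulVec_le_one hsym hGe hν hLMI hx hu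
    _ ≤ ∑ i, ν i * R i ^ 2 := by
        refine Finset.sum_le_sum fun i _ => mul_le_mul_of_nonneg_left ?_ (hν i).le
        exact sq_le_sq.mpr ((hxR i).trans (le_abs_self _))

/-- If `G + ζ e eᵀ ⪰ D_ν⁻¹` then, for every `x ∈ S` with
`|x_i| ≤ R_i`, the squared dual norm of `x` is at most `∑_i ν_i R_i²`. -/
theorem stmt_16 (N : ℕ) (hN : 2 ≤ N) (G : Matrix (Fin N) (Fin N) ℝ)
    (hsym : G.IsSymm) (hpsd : G.PosSemidef)
    (hGe : G.mulVec (fun _ => (1 : ℝ)) = 0)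
    (ζ : ℝ) (hζ : 0 ≤ ζ) (ν : Fin N → ℝ) (hν : ∀ i, 0 < ν i)
    (R : Fin N → ℝ) (hR : ∀ i, 0 < R i)
    (hLMI : (G + ζ • Matrix.of (fun _ _ : Fin N => (1 : ℝ))
      - Matrix.diagonal (fun i => (ν i)⁻¹)).PosSemidef)
    (x : Fin N → ℝ) (hx : ∑ i, x i = 0) (hxR : ∀ i, |x i| ≤ R i) :
    (sSup {r : ℝ | ∃ u : Fin N → ℝ,
        (∑ i, ∑ j, u i * G i j * u j) ≤ 1 ∧ r = ∑ i, x i * u i}) ^ 2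
      ≤ ∑ i, ν i * (R i) ^ 2 :=
  stmt_16_general N G hsym hGe ζ ν hν R hLMI x hx hxR
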